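/- For v in the interior of the second-order cone K ⊆ ℝ^d, and for any w in the interior of K, the truncated cone C(w,v) = {x ∈ K : wᵀx ≤ wᵀv} has volume (wᵀv / √(w_0² - ‖w_1‖²))^d · V_d, where V_d is the volume of the standard truncated cone C(e,e) = {x ∈ K : x_0 ≤ 1}; this is minimized over w exactly at w = (v_0; -v_1), with minimal volume (v_0² - ‖v_1‖²)^{d/2} · V_d. -/

import Mathlib

open scoped BigOperators RealInnerProductSpace
open MeasureTheory

/-- The second-order cone in `ℝ^{n+1}`. -/
def socE (n : ℕ) : Set (EuclideanSpace ℝ (Fin (n + 1))) :=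
  {x | Real.sqrt (∑ j : Fin n, x j.succ ^ 2) ≤ x 0}

/-- The interior of the second-order cone. -/
def socIntE (n : ℕ) : Set (EuclideanSpace ℝ (Fin (n + 1))) :=
  {x | Real.sqrt (∑ j : Fin n, x j.succ ^ 2) < x 0}

/-- The (obliquely) truncated second-order cone `C(w,v) = {x ∈ K : wᵀx ≤ wᵀv}`. -/
def Ctrunc (n : ℕ) (w v : EuclideanSpace ℝ (Fin (n + 1))) :
    Set (EuclideanSpace ℝ (Fin (n + 1))) :=
  {x ∈ socE n | ⟪w, x⟫ ≤ ⟪w, v⟫}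

/-- The unit vector `e = (1; 0)`. -/
noncomputable def eSOC (n : ℕ) : EuclideanSpace ℝ (Fin (n + 1)) :=
  EuclideanSpace.single 0 1

/-! For `w` in the interior of `K` let `s = √(w₀² - ‖w₁‖²)`. The Lorentz boost `L_w` with time
coordinate `(L_w x)₀ = ⟪w, x⟫ / s` preserves the form `x₀² - ‖x₁‖²`, hence the cone `K`, and its
inverse is its conjugate by the reflection `(x₀; x₁) ↦ (x₀; -x₁)`, so `|det L_w| = 1`. Thus
`(s / ⟪w, v⟫) • L_w` maps `C(w,v)` onto `C(e,e)`, which gives the volume formula. The minimisation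
is the reverse Cauchy–Schwarz inequality `√(w₀² - ‖w₁‖²) √(v₀² - ‖v₁‖²) ≤ ⟪w, v⟫` on `K`, an
equality at `w = (v₀; -v₁)`. -/

namespace SecondOrderCone

variable {n : ℕ} {w v x y : EuclideanSpace ℝ (Fin (n + 1))}

def lorentzSq (n : ℕ) (x : EuclideanSpace ℝ (Fin (n + 1))) : ℝ :=
  x 0 ^ 2 - ∑ j : Fin n, x j.succ ^ 2

lemma inner_eq_mul_add_sum (w x : EuclideanSpace ℝ (Fin (n + 1))) :
    ⟪w, x⟫ = w 0 * x 0 + ∑ j : Fin n, w j.succ * x j.succ := by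
  simp [PiLp.inner_apply, Fin.sum_univ_succ, mul_comm]

lemma inner_eSOC (x : EuclideanSpace ℝ (Fin (n + 1))) : ⟪eSOC n, x⟫ = x 0 := by
  simp [eSOC, EuclideanSpace.inner_single_left]

lemma mem_Ctrunc_eSOC : x ∈ Ctrunc n (eSOC n) (eSOC n) ↔ x ∈ socE n ∧ x 0 ≤ 1 := by
  rw [Ctrunc, Set.mem_sep_iff, inner_eSOC, inner_eSOC]
  simp [eSOC]

lemma sum_succ_mul_add_smul (w y : EuclideanSpace ℝ (Fin (n + 1))) (t : ℝ) :
    ∑ j : Fin n, w j.succ * (y j.succ + t * w j.succ) =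
      ∑ j : Fin n, w j.succ * y j.succ + t * ∑ j : Fin n, w j.succ ^ 2 := by
  simp only [Finset.mul_sum, ← Finset.sum_add_distrib]
  exact Finset.sum_congr rfl fun j _ => by ring

lemma sum_succ_add_smul_sq (w y : EuclideanSpace ℝ (Fin (n + 1))) (t : ℝ) :
    ∑ j : Fin n, (y j.succ + t * w j.succ) ^ 2 =
      ∑ j : Fin n, y j.succ ^ 2 + 2 * t * ∑ j : Fin n, w j.succ * y j.succ +
        t ^ 2 * ∑ j : Fin n, w j.succ ^ 2 := by
  simp only [Finset.mul_sum, ← Finset.sum_add_distrib]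
  exact Finset.sum_congr rfl fun j _ => by ring

lemma mem_socE_iff : x ∈ socE n ↔ 0 ≤ x 0 ∧ 0 ≤ lorentzSq n x := by
  rw [socE, Set.mem_ofPred_eq, Real.sqrt_le_iff, lorentzSq, sub_nonneg]

lemma zero_lt_of_mem_socIntE (hx : x ∈ socIntE n) : 0 < x 0 :=
  (Real.sqrt_nonneg _).trans_lt hx

lemma lorentzSq_pos (hx : x ∈ socIntE n) : 0 < lorentzSq n x := by
  have hx' : √(∑ j : Fin n, x j.succ ^ 2) < x 0 := hx
  rw [Real.sqrt_lt' (zero_lt_of_mem_socIntE hx)] at hx'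
  exact sub_pos.2 hx'

lemma sum_sq_succ_eq (hx : 0 ≤ lorentzSq n x) :
    ∑ j : Fin n, x j.succ ^ 2 = x 0 ^ 2 - √(lorentzSq n x) ^ 2 := by
  rw [Real.sq_sqrt hx, lorentzSq]
  ring

lemma mem_socE_of_mem_socIntE (hx : x ∈ socIntE n) : x ∈ socE n :=
  Set.mem_ofPred.2 (le_of_lt hx)

lemma smul_mem_socE_iff {c : ℝ} (hc : 0 < c) : c • x ∈ socE n ↔ x ∈ socE n := by
  have hsq : lorentzSq n (c • x) = c ^ 2 * lorentzSq n x := by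
    simp only [lorentzSq, PiLp.smul_apply, smul_eq_mul, mul_pow, ← Finset.mul_sum]
    ring
  rw [mem_socE_iff, mem_socE_iff, hsq, PiLp.smul_apply, smul_eq_mul,
    mul_nonneg_iff_of_pos_left hc, mul_nonneg_iff_of_pos_left (pow_pos hc 2)]

lemma sqrt_lorentzSq_mul_le_inner (hw : w ∈ socE n) (hv : v ∈ socE n) :
    √(lorentzSq n w) * √(lorentzSq n v) ≤ ⟪w, v⟫ := by
  set a := √(∑ j : Fin n, w j.succ ^ 2)
  set b := √(∑ j : Fin n, v j.succ ^ 2)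
  have ha : a ^ 2 = ∑ j : Fin n, w j.succ ^ 2 := Real.sq_sqrt (by positivity)
  have hb : b ^ 2 = ∑ j : Fin n, v j.succ ^ 2 := Real.sq_sqrt (by positivity)
  have haw : a ≤ w 0 := hw
  have hbv : b ≤ v 0 := hv
  have hCS : -(a * b) ≤ ∑ j : Fin n, w j.succ * v j.succ := by
    have := Real.sum_mul_le_sqrt_mul_sqrt Finset.univ (fun j : Fin n => -w j.succ)
      (fun j : Fin n => v j.succ)
    simp only [neg_mul, Finset.sum_neg_distrib, neg_sq] at this
    linarith
  have hab : 0 ≤ w 0 * v 0 - a * b :=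
    sub_nonneg.2 (mul_le_mul haw hbv (Real.sqrt_nonneg _) ((Real.sqrt_nonneg _).trans haw))
  have hprod : lorentzSq n w * lorentzSq n v ≤ (w 0 * v 0 - a * b) ^ 2 := by
    rw [lorentzSq, lorentzSq, ← ha, ← hb]
    nlinarith [sq_nonneg (w 0 * b - v 0 * a)]
  calc √(lorentzSq n w) * √(lorentzSq n v)
      = √(lorentzSq n w * lorentzSq n v) := (Real.sqrt_mul ((mem_socE_iff.1 hw).2) _).symm
    _ ≤ w 0 * v 0 - a * b := Real.sqrt_le_iff.2 ⟨hab, hprod⟩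
    _ ≤ ⟪w, v⟫ := by rw [inner_eq_mul_add_sum]; linarith

lemma inner_nonneg_of_mem_socE (hw : w ∈ socE n) (hv : v ∈ socE n) : 0 ≤ ⟪w, v⟫ :=
  (mul_nonneg (Real.sqrt_nonneg _) (Real.sqrt_nonneg _)).trans
    (sqrt_lorentzSq_mul_le_inner hw hv)

lemma inner_pos_of_mem_socIntE (hw : w ∈ socIntE n) (hv : v ∈ socIntE n) : 0 < ⟪w, v⟫ :=
  (mul_pos (Real.sqrt_pos.2 (lorentzSq_pos hw)) (Real.sqrt_pos.2 (lorentzSq_pos hv))).trans_le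
    (sqrt_lorentzSq_mul_le_inner (mem_socE_of_mem_socIntE hw) (mem_socE_of_mem_socIntE hv))

def negTail (n : ℕ) : EuclideanSpace ℝ (Fin (n + 1)) →ₗ[ℝ] EuclideanSpace ℝ (Fin (n + 1)) where
  toFun x := WithLp.toLp 2 fun i => Fin.cases (x 0) (fun j => -x j.succ) i
  map_add' x y := by
    ext i
    refine Fin.cases ?_ (fun j => ?_) i <;> simp [add_comm]
  map_smul' c x := by
    ext i
    refine Fin.cases ?_ (fun j => ?_) i <;> simp

@[simp] lemma negTail_apply_zero (x : EuclideanSpace ℝ (Fin (n + 1))) : negTail n x 0 = x 0 := rfl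

@[simp] lemma negTail_apply_succ (x : EuclideanSpace ℝ (Fin (n + 1))) (j : Fin n) :
    negTail n x j.succ = -x j.succ := rfl

lemma negTail_comp_negTail : negTail n ∘ₗ negTail n = LinearMap.id := by
  ext x i
  refine Fin.cases ?_ (fun j => ?_) i <;> simp

@[simp] lemma lorentzSq_negTail (x : EuclideanSpace ℝ (Fin (n + 1))) :
    lorentzSq n (negTail n x) = lorentzSq n x := by
  simp [lorentzSq]

lemma inner_negTail_swap (w x : EuclideanSpace ℝ (Fin (n + 1))) :
    ⟪negTail n w, x⟫ = ⟪w, negTail n x⟫ := by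
  simp [inner_eq_mul_add_sum]

lemma inner_negTail_left (w x : EuclideanSpace ℝ (Fin (n + 1))) :
    ⟪negTail n w, x⟫ = w 0 * x 0 - ∑ j : Fin n, w j.succ * x j.succ := by
  simp [inner_eq_mul_add_sum, sub_eq_add_neg]

lemma inner_negTail_self (x : EuclideanSpace ℝ (Fin (n + 1))) :
    ⟪negTail n x, x⟫ = lorentzSq n x := by
  simp [inner_negTail_left, lorentzSq, sq]

lemma negTail_mem_socIntE (hx : x ∈ socIntE n) : negTail n x ∈ socIntE n := by
  simpa [socIntE] using hx

/-- The Lorentz boost taking `(w₀; -w₁) / √(w₀² - ‖w₁‖²)` to `e`. -/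
noncomputable def lorentzBoost (w : EuclideanSpace ℝ (Fin (n + 1))) :
    EuclideanSpace ℝ (Fin (n + 1)) →ₗ[ℝ] EuclideanSpace ℝ (Fin (n + 1)) where
  toFun y := WithLp.toLp 2 fun i => Fin.cases (⟪w, y⟫ / √(lorentzSq n w))
    (fun j => y j.succ + (⟪w, y⟫ / √(lorentzSq n w) + y 0) / (w 0 + √(lorentzSq n w)) * w j.succ) i
  map_add' x y := by
    ext i
    refine Fin.cases ?_ (fun j => ?_) i <;> simp [inner_add_right] <;> ring
  map_smul' c x := by
    ext i
    refine Fin.cases ?_ (fun j => ?_) i <;> simp [real_inner_smul_right] <;> ring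

@[simp] lemma lorentzBoost_apply_zero (w y : EuclideanSpace ℝ (Fin (n + 1))) :
    lorentzBoost w y 0 = ⟪w, y⟫ / √(lorentzSq n w) := rfl

@[simp] lemma lorentzBoost_apply_succ (w y : EuclideanSpace ℝ (Fin (n + 1))) (j : Fin n) :
    lorentzBoost w y j.succ =
      y j.succ + (⟪w, y⟫ / √(lorentzSq n w) + y 0) / (w 0 + √(lorentzSq n w)) * w j.succ := rfl

lemma lorentzBoost_negTail (w : EuclideanSpace ℝ (Fin (n + 1))) :
    lorentzBoost (negTail n w) = negTail n ∘ₗ lorentzBoost w ∘ₗ negTail n := by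
  ext y i
  refine Fin.cases ?_ (fun j => ?_) i <;> simp [inner_negTail_swap, add_comm]

section lorentzBoost

variable (hw : w ∈ socIntE n)
include hw

lemma lorentzSq_lorentzBoost (y : EuclideanSpace ℝ (Fin (n + 1))) :
    lorentzSq n (lorentzBoost w y) = lorentzSq n y := by
  have hw0 := zero_lt_of_mem_socIntE hw
  have hs0 : 0 < √(lorentzSq n w) := Real.sqrt_pos.2 (lorentzSq_pos hw)
  rw [lorentzSq, lorentzSq]
  simp only [lorentzBoost_apply_zero, lorentzBoost_apply_succ, sum_succ_add_smul_sq,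
    inner_eq_mul_add_sum w y]
  rw [sum_sq_succ_eq (lorentzSq_pos hw).le]
  field_simp
  ring

lemma lorentzBoost_negTail_lorentzBoost (y : EuclideanSpace ℝ (Fin (n + 1))) :
    lorentzBoost (negTail n w) (lorentzBoost w y) = y := by
  have hw0 := zero_lt_of_mem_socIntE hw
  have hs0 : 0 < √(lorentzSq n w) := Real.sqrt_pos.2 (lorentzSq_pos hw)
  have htime : ⟪negTail n w, lorentzBoost w y⟫ / √(lorentzSq n w) = y 0 := by
    simp only [inner_negTail_left, lorentzBoost_apply_zero, lorentzBoost_apply_succ,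
      sum_succ_mul_add_smul, inner_eq_mul_add_sum w y]
    rw [sum_sq_succ_eq (lorentzSq_pos hw).le]
    field_simp
    ring
  ext i
  refine Fin.cases ?_ (fun j => ?_) i
  · simpa using htime
  · simp only [lorentzBoost_apply_succ, lorentzSq_negTail, htime, negTail_apply_zero,
      negTail_apply_succ, lorentzBoost_apply_zero]
    field_simp
    ring

lemma lorentzBoost_mem_socE (hy : y ∈ socE n) : lorentzBoost w y ∈ socE n := by
  rw [mem_socE_iff, lorentzSq_lorentzBoost hw, lorentzBoost_apply_zero]
  exact ⟨div_nonneg (inner_nonneg_of_mem_socE (mem_socE_of_mem_socIntE hw) hy)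
    (Real.sqrt_nonneg _), (mem_socE_iff.1 hy).2⟩

lemma lorentzBoost_mem_socE_iff : lorentzBoost w y ∈ socE n ↔ y ∈ socE n :=
  ⟨fun h => lorentzBoost_negTail_lorentzBoost hw y ▸
    lorentzBoost_mem_socE (negTail_mem_socIntE hw) h, lorentzBoost_mem_socE hw⟩

lemma abs_det_lorentzBoost : |LinearMap.det (lorentzBoost w)| = 1 := by
  have hinv : LinearMap.det (lorentzBoost (negTail n w)) * LinearMap.det (lorentzBoost w) = 1 := by
    rw [← LinearMap.det_comp,
      show lorentzBoost (negTail n w) ∘ₗ lorentzBoost w = LinearMap.id from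
        LinearMap.ext (lorentzBoost_negTail_lorentzBoost hw), LinearMap.det_id]
  have hneg : LinearMap.det (negTail n) * LinearMap.det (negTail n) = 1 := by
    rw [← LinearMap.det_comp, negTail_comp_negTail, LinearMap.det_id]
  rw [lorentzBoost_negTail, LinearMap.det_comp, LinearMap.det_comp] at hinv
  have hsq : |LinearMap.det (lorentzBoost w)| ^ 2 = 1 := by
    rw [sq_abs]
    linear_combination hinv - LinearMap.det (lorentzBoost w) ^ 2 * hneg
  exact (pow_eq_one_iff_of_nonneg (abs_nonneg _) two_ne_zero).1 hsq

end lorentzBoost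

lemma Ctrunc_eq_preimage (hw : w ∈ socIntE n) (hwv : 0 < ⟪w, v⟫) :
    Ctrunc n w v =
      ((√(lorentzSq n w) / ⟪w, v⟫) • lorentzBoost w) ⁻¹' Ctrunc n (eSOC n) (eSOC n) := by
  have hs0 : 0 < √(lorentzSq n w) := Real.sqrt_pos.2 (lorentzSq_pos hw)
  ext y
  have htime : √(lorentzSq n w) / ⟪w, v⟫ * (⟪w, y⟫ / √(lorentzSq n w)) = ⟪w, y⟫ / ⟪w, v⟫ := by
    field_simp
  rw [Set.mem_preimage, mem_Ctrunc_eSOC, LinearMap.smul_apply, smul_mem_socE_iff (div_pos hs0 hwv),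
    lorentzBoost_mem_socE_iff hw, PiLp.smul_apply, smul_eq_mul, lorentzBoost_apply_zero, htime,
    div_le_one hwv]
  rfl

theorem volume_Ctrunc (hw : w ∈ socIntE n) (hwv : 0 < ⟪w, v⟫) :
    volume (Ctrunc n w v) =
      ENNReal.ofReal ((⟪w, v⟫ / √(lorentzSq n w)) ^ (n + 1)) *
        volume (Ctrunc n (eSOC n) (eSOC n)) := by
  have hc : 0 < √(lorentzSq n w) / ⟪w, v⟫ := div_pos (Real.sqrt_pos.2 (lorentzSq_pos hw)) hwv
  have hdet : |LinearMap.det ((√(lorentzSq n w) / ⟪w, v⟫) • lorentzBoost w)| =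
      (√(lorentzSq n w) / ⟪w, v⟫) ^ (n + 1) := by
    rw [LinearMap.det_smul, finrank_euclideanSpace_fin, abs_mul, abs_det_lorentzBoost hw, abs_pow,
      abs_of_pos hc, mul_one]
  rw [Ctrunc_eq_preimage hw hwv,
    Measure.addHaar_preimage_linearMap _ (abs_ne_zero.1 (hdet ▸ by positivity)), abs_inv, hdet,
    ← inv_pow, inv_div]

end SecondOrderCone

open SecondOrderCone

/-- for interior `v` and any interior `w`,
`vol C(w,v) = (wᵀv/√(w₀²-‖w₁‖²))^d ⬝ V_d`, minimized exactly at `w* = (v₀; -v₁)` with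
minimal value `(v₀² - ‖v₁‖²)^{d/2} ⬝ V_d`. -/
theorem stmt9 (n : ℕ) (v : EuclideanSpace ℝ (Fin (n + 1))) (hv : v ∈ socIntE n)
    (wstar : EuclideanSpace ℝ (Fin (n + 1)))
    (hwstar : wstar = WithLp.toLp 2 (fun i : Fin (n + 1) => (Fin.cases (v 0) (fun j => -v j.succ) i : ℝ))) :
    (∀ w ∈ socIntE n,
      volume (Ctrunc n w v) =
        ENNReal.ofReal
            ((⟪w, v⟫ / Real.sqrt (w 0 ^ 2 - ∑ j : Fin n, w j.succ ^ 2)) ^ (n + 1)) *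
          volume (Ctrunc n (eSOC n) (eSOC n))) ∧
    (∀ w ∈ socIntE n, volume (Ctrunc n wstar v) ≤ volume (Ctrunc n w v)) ∧
    volume (Ctrunc n wstar v) =
      ENNReal.ofReal ((v 0 ^ 2 - ∑ j : Fin n, v j.succ ^ 2) ^ (((n : ℝ) + 1) / 2)) *
        volume (Ctrunc n (eSOC n) (eSOC n)) := by
  obtain rfl : wstar = negTail n v := hwstar
  have hstar : volume (Ctrunc n (negTail n v) v) =
      ENNReal.ofReal (√(lorentzSq n v) ^ (n + 1)) * volume (Ctrunc n (eSOC n) (eSOC n)) := by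
    rw [volume_Ctrunc (negTail_mem_socIntE hv) (inner_negTail_self v ▸ lorentzSq_pos hv),
      inner_negTail_self, lorentzSq_negTail, Real.div_sqrt]
  refine ⟨fun w hw => volume_Ctrunc hw (inner_pos_of_mem_socIntE hw hv), fun w hw => ?_, ?_⟩
  · rw [hstar, volume_Ctrunc hw (inner_pos_of_mem_socIntE hw hv)]
    gcongr
    rw [le_div_iff₀ (Real.sqrt_pos.2 (lorentzSq_pos hw)), mul_comm]
    exact sqrt_lorentzSq_mul_le_inner (mem_socE_of_mem_socIntE hw) (mem_socE_of_mem_socIntE hv)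
  · rw [hstar, Real.sqrt_eq_rpow, ← Real.rpow_natCast, ← Real.rpow_mul (lorentzSq_pos hv).le]
    congr 3
    push_cast
    ring
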